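/- Let μ ∈ ℝ and Δ = 1/2 + iμ. Then for all integers n, m ∈ ℤ, the integral ∫_ℝ conj(ψ_n^{(Δ)}(x)) · ψ_m^{(Δ)}(x) dx converges absolutely and equals 1 if n = m and 0 otherwise. -/

import Mathlib

open Complex MeasureTheory

/-- The basis wavefunction `ψ_n^{(Δ)}(x) = (2π)^{-1/2} ((1-ix)/(1+ix))^n 2^Δ (1+x²)^{-Δ}`,
with complex powers on the principal branch. -/
noncomputable def psi (Δ : ℂ) (n : ℤ) (x : ℝ) : ℂ :=
  ((Real.sqrt (2 * Real.pi) : ℂ))⁻¹ * ((1 - Complex.I * x) / (1 + Complex.I * x)) ^ n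
    * (2 : ℂ) ^ Δ * ((1 : ℂ) + (x : ℂ) ^ 2) ^ (-Δ)

/-!
Write `w = 1 + ix`, so that the phase of `ψ_n` is `cayley x = w̄ / w`, a point of the unit circle.
For `Re Δ = 1/2` the amplitude `2^Δ (1 + x²)^{-Δ}` has squared modulus `2 / (1 + x²)`, hence
`conj ψ_n · ψ_m = cayley^(m-n) / (π (1 + x²))`. Since `cayley` has logarithmic derivative
`-2i / (1 + x²)`, for `k ≠ 0` the function `cayley^k / (1 + x²)` has the primitive `i cayley^k / 2k`,
whose limits at `±∞` agree because `cayley → -1` at both ends; for `k = 0` the integral is `π`.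
-/

open Filter Topology

lemma one_add_I_mul_ofReal_ne_zero (x : ℝ) : 1 + I * x ≠ 0 := by
  intro h
  simpa using congrArg re h

lemma one_add_ofReal_sq_ne_zero (x : ℝ) : 1 + (x : ℂ) ^ 2 ≠ 0 := by
  exact_mod_cast (by positivity : (1 + x ^ 2 : ℝ) ≠ 0)

noncomputable def cayley (x : ℝ) : ℂ := (1 - I * x) / (1 + I * x)

lemma cayley_eq_two_mul_inv_sub_one (x : ℝ) : cayley x = 2 * (1 + I * x)⁻¹ - 1 := by
  have := one_add_I_mul_ofReal_ne_zero x
  rw [cayley]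
  field_simp
  ring

lemma conj_cayley (x : ℝ) : starRingEnd ℂ (cayley x) = (cayley x)⁻¹ := by
  simp [cayley, map_div₀, conj_ofReal, sub_eq_add_neg]

lemma norm_cayley (x : ℝ) : ‖cayley x‖ = 1 := by
  have hconj : 1 - I * x = starRingEnd ℂ (1 + I * x) := by simp [sub_eq_add_neg]
  rw [cayley, hconj, norm_div, norm_conj,
    div_self (norm_ne_zero_iff.2 (one_add_I_mul_ofReal_ne_zero x))]

lemma cayley_ne_zero (x : ℝ) : cayley x ≠ 0 :=
  norm_ne_zero_iff.1 (by simp [norm_cayley])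

lemma continuous_cayley : Continuous cayley := by
  unfold cayley
  exact (by fun_prop : Continuous fun x : ℝ => 1 - I * x).div (by fun_prop)
    one_add_I_mul_ofReal_ne_zero

lemma tendsto_cayley_cocompact : Tendsto cayley (cocompact ℝ) (𝓝 (-1)) := by
  have hw : Tendsto (fun x : ℝ => 1 + I * x) (cocompact ℝ) (Bornology.cobounded ℂ) := by
    refine tendsto_norm_atTop_iff_cobounded.1 (tendsto_atTop_mono (fun x => ?_)
      tendsto_norm_cocompact_atTop)
    simpa using abs_im_le_norm (1 + I * x)
  have := ((tendsto_inv₀_cobounded.comp hw).const_mul 2).sub_const 1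
  rw [mul_zero, zero_sub] at this
  exact this.congr fun x => (cayley_eq_two_mul_inv_sub_one x).symm

lemma hasDerivAt_cayley (x : ℝ) :
    HasDerivAt cayley (-2 * I * cayley x / (1 + (x : ℂ) ^ 2)) x := by
  have hw : HasDerivAt (fun y : ℝ => 1 + I * y) I x := by
    simpa using ((hasDerivAt_id (x : ℂ)).const_mul I).const_add 1 |>.comp_ofReal
  have := ((hw.inv (one_add_I_mul_ofReal_ne_zero x)).const_mul 2).sub_const 1
  refine (this.congr_of_eventuallyEq (.of_forall cayley_eq_two_mul_inv_sub_one)).congr_deriv ?_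
  have h1 := one_add_I_mul_ofReal_ne_zero x
  have h2 := one_add_ofReal_sq_ne_zero x
  rw [cayley]
  field_simp
  linear_combination (-(x : ℂ) ^ 2) * I_sq

lemma hasDerivAt_cayley_zpow (k : ℤ) (x : ℝ) :
    HasDerivAt (fun y => cayley y ^ k) (-2 * I * k * cayley x ^ k / (1 + (x : ℂ) ^ 2)) x := by
  refine ((hasDerivAt_zpow k _ (Or.inl (cayley_ne_zero x))).comp x
    (hasDerivAt_cayley x)).congr_deriv ?_
  rw [zpow_sub_one₀ (cayley_ne_zero x)]
  field_simp [cayley_ne_zero x]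

lemma norm_cayley_zpow_div (k : ℤ) (x : ℝ) :
    ‖cayley x ^ k / (1 + (x : ℂ) ^ 2)‖ = (1 + x ^ 2)⁻¹ := by
  rw [norm_div, norm_zpow, norm_cayley, one_zpow, one_div]
  norm_cast
  rw [Real.norm_of_nonneg (by positivity)]

lemma integrable_cayley_zpow_div (k : ℤ) :
    Integrable (fun x : ℝ => cayley x ^ k / (1 + (x : ℂ) ^ 2)) := by
  refine integrable_inv_one_add_sq.mono' ?_ (.of_forall fun x => (norm_cayley_zpow_div k x).le)
  exact ((continuous_cayley.zpow₀ k fun x => .inl (cayley_ne_zero x)).div (by fun_prop)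
    one_add_ofReal_sq_ne_zero).aestronglyMeasurable

lemma integral_cayley_zpow_div (k : ℤ) :
    ∫ x : ℝ, cayley x ^ k / (1 + (x : ℂ) ^ 2) = if k = 0 then (Real.pi : ℂ) else 0 := by
  split_ifs with hk
  · subst hk
    have h := integral_ofReal (𝕜 := ℂ) (μ := volume) (f := fun x : ℝ => (1 + x ^ 2)⁻¹)
    rw [integral_univ_inv_one_add_sq] at h
    simpa [one_div] using h
  · have hk' : (k : ℂ) ≠ 0 := Int.cast_ne_zero.2 hk
    have hderiv (x : ℝ) : HasDerivAt (fun y => I / (2 * k) * cayley y ^ k)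
        (cayley x ^ k / (1 + (x : ℂ) ^ 2)) x := by
      refine ((hasDerivAt_cayley_zpow k x).const_mul _).congr_deriv ?_
      have := one_add_ofReal_sq_ne_zero x
      field_simp
      linear_combination (-cayley x ^ k) * I_sq
    have hlim : Tendsto (fun y => I / (2 * k) * cayley y ^ k) (cocompact ℝ)
        (𝓝 (I / (2 * k) * (-1) ^ k)) :=
      (tendsto_cayley_cocompact.zpow₀ k (.inl (by norm_num))).const_mul _
    rw [integral_of_hasDerivAt_of_tendsto hderiv (integrable_cayley_zpow_div k)
      (hlim.mono_left atBot_le_cocompact) (hlim.mono_left atTop_le_cocompact), sub_self]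

lemma sq_norm_ofReal_cpow {r : ℝ} (hr : 0 < r) {Δ : ℂ} (hΔ : Δ.re = 1 / 2) :
    ‖(r : ℂ) ^ Δ‖ ^ 2 = r := by
  rw [norm_cpow_eq_rpow_re_of_pos hr, hΔ, ← Real.sqrt_eq_rpow, Real.sq_sqrt hr.le]

lemma sq_norm_two_cpow_mul_cpow_neg {Δ : ℂ} (hΔ : Δ.re = 1 / 2) (x : ℝ) :
    ‖(2 : ℂ) ^ Δ * (1 + (x : ℂ) ^ 2) ^ (-Δ)‖ ^ 2 = 2 / (1 + x ^ 2) := by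
  have h2 : (2 : ℂ) = ((2 : ℝ) : ℂ) := by norm_num
  have hx : 1 + (x : ℂ) ^ 2 = ((1 + x ^ 2 : ℝ) : ℂ) := by push_cast; ring
  rw [h2, hx, cpow_neg, norm_mul, norm_inv, mul_pow, inv_pow,
    sq_norm_ofReal_cpow two_pos hΔ, sq_norm_ofReal_cpow (by positivity) hΔ, div_eq_mul_inv]

lemma psi_eq (Δ : ℂ) (n : ℤ) (x : ℝ) :
    psi Δ n x = (Real.sqrt (2 * Real.pi) : ℂ)⁻¹ * cayley x ^ n
      * ((2 : ℂ) ^ Δ * (1 + (x : ℂ) ^ 2) ^ (-Δ)) := by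
  rw [psi, cayley, mul_assoc _ ((2 : ℂ) ^ Δ)]

lemma conj_psi_mul_psi {Δ : ℂ} (hΔ : Δ.re = 1 / 2) (n m : ℤ) (x : ℝ) :
    starRingEnd ℂ (psi Δ n x) * psi Δ m x
      = (Real.pi : ℂ)⁻¹ * (cayley x ^ (m - n) / (1 + (x : ℂ) ^ 2)) := by
  have hnormA := sq_norm_two_cpow_mul_cpow_neg hΔ x
  set c : ℂ := (Real.sqrt (2 * Real.pi) : ℂ)⁻¹
  set A : ℂ := (2 : ℂ) ^ Δ * (1 + (x : ℂ) ^ 2) ^ (-Δ)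
  have hc : starRingEnd ℂ c * c = ((2 * Real.pi : ℝ) : ℂ)⁻¹ := by
    rw [map_inv₀, conj_ofReal, ← mul_inv, ← ofReal_mul, Real.mul_self_sqrt (by positivity)]
  have hcayley : starRingEnd ℂ (cayley x ^ n) * cayley x ^ m = cayley x ^ (m - n) := by
    rw [map_zpow₀, conj_cayley, inv_zpow', ← zpow_add₀ (cayley_ne_zero x), neg_add_eq_sub]
  have hA : starRingEnd ℂ A * A = 2 / (1 + (x : ℂ) ^ 2) := by
    rw [conj_mul', ← ofReal_pow, hnormA]
    push_cast
    ring
  calc starRingEnd ℂ (psi Δ n x) * psi Δ m x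
      = (starRingEnd ℂ c * c) * (starRingEnd ℂ (cayley x ^ n) * cayley x ^ m)
          * (starRingEnd ℂ A * A) := by
        rw [psi_eq, psi_eq, map_mul, map_mul]
        ring
    _ = (Real.pi : ℂ)⁻¹ * (cayley x ^ (m - n) / (1 + (x : ℂ) ^ 2)) := by
        rw [hc, hcayley, hA]
        push_cast
        field_simp

/-- For principal series `Δ = 1/2 + iμ`, the `ψ_n^{(Δ)}` are orthonormal in `L²(ℝ)`. -/
theorem stmt4 (μ : ℝ) (Δ : ℂ) (hΔ : Δ = 1/2 + Complex.I * μ) (n m : ℤ) :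
    Integrable (fun x : ℝ => (starRingEnd ℂ) (psi Δ n x) * psi Δ m x) ∧
    (∫ x : ℝ, (starRingEnd ℂ) (psi Δ n x) * psi Δ m x) = if n = m then 1 else 0 := by
  have hre : Δ.re = 1 / 2 := by simp [hΔ]
  simp_rw [conj_psi_mul_psi hre]
  refine ⟨(integrable_cayley_zpow_div (m - n)).const_mul _, ?_⟩
  rw [integral_const_mul, integral_cayley_zpow_div]
  have hπ : (Real.pi : ℂ) ≠ 0 := ofReal_ne_zero.2 Real.pi_ne_zero
  by_cases h : n = m
  · simp [h, hπ]
  · simp [sub_eq_zero, Ne.symm h, h]
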